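/- Let k ≥ 2 and n = 2k. If c is a radio labeling of C_n □ C_n, then for any three vertices u, v, w of C_n □ C_n with c(u) < c(v) < c(w), one has c(w) − c(u) ≥ k + 2. -/

import Mathlib

open SimpleGraph

/-- `c` is a radio labeling of `G`: labels are positive integers and for every two
distinct vertices `u, v` we have `d(u,v) + |c(u) - c(v)| ≥ 1 + diam(G)`. -/
def IsRadioLabeling {V : Type*} (G : SimpleGraph V) (c : V → ℕ) : Prop :=
  (∀ v, 1 ≤ c v) ∧
    ∀ u v : V, u ≠ v → G.diam + 1 ≤ G.dist u v + Nat.dist (c u) (c v)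

/-- The span of a labeling: the maximum label used. -/
def labelSpan {V : Type*} [Fintype V] (c : V → ℕ) : ℕ := Finset.univ.sup c

/-- The radio number of `G`: the minimum span over all radio labelings. -/
noncomputable def radioNumber {V : Type*} [Fintype V] (G : SimpleGraph V) : ℕ :=
  sInf {s | ∃ c : V → ℕ, IsRadioLabeling G c ∧ labelSpan c = s}

/-!
Summing the radio condition over the three pairs among `u, v, w` gives
`3 (diam + 1) ≤ d(u,v) + d(v,w) + d(u,w) + 2 (c w - c u)`. Distances in `C_n □ C_n` add over the
two coordinates, and three points on a cycle of length `n` have pairwise distances summing to at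
most `n`, so the distance terms contribute at most `2n = 4k`, while `diam ≥ 2k`, witnessed by two
antipodal points in each coordinate. Hence `2 (c w - c u) ≥ 2k + 3`.
-/

namespace SimpleGraph

variable {V W : Type*} {G : SimpleGraph V} {H : SimpleGraph W}

lemma Walk.apply_le_apply_add_length {f : V → ℕ} (hf : ∀ a b, G.Adj a b → f a ≤ f b + 1) :
    ∀ {u v : V} (p : G.Walk u v), f u ≤ f v + p.length
  | _, _, .nil => by simp
  | _, _, .cons h p => by
    have := hf _ _ h
    have := apply_le_apply_add_length hf p
    rw [Walk.length_cons]
    omega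

lemma Reachable.apply_le_apply_add_dist {f : V → ℕ}
    (hf : ∀ a b, G.Adj a b → f a ≤ f b + 1) {u v : V} (h : G.Reachable u v) :
    f u ≤ f v + G.dist u v := by
  obtain ⟨p, hp⟩ := h.exists_walk_length_eq_dist
  exact hp ▸ p.apply_le_apply_add_length hf

lemma dist_boxProd {x y : V × W} (hG : G.Reachable x.1 y.1) (hH : H.Reachable x.2 y.2) :
    (G □ H).dist x y = G.dist x.1 y.1 + H.dist x.2 y.2 := by
  rw [dist, edist_boxProd, ENat.toNat_add (edist_ne_top_iff_reachable.2 hG)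
    (edist_ne_top_iff_reachable.2 hH)]
  rfl

lemma diam_add_diam_le_diam_boxProd [Finite V] [Finite W] (hG : G.Connected) (hH : H.Connected) :
    G.diam + H.diam ≤ (G □ H).diam := by
  have := hG.nonempty
  have := hH.nonempty
  obtain ⟨a, b, hab⟩ := G.exists_dist_eq_diam
  obtain ⟨c, d, hcd⟩ := H.exists_dist_eq_diam
  rw [← hab, ← hcd, ← dist_boxProd (x := (a, c)) (y := (b, d)) (hG.preconnected a b)
    (hH.preconnected c d)]
  exact dist_le_diam (connected_iff_ediam_ne_top.1 (hG.boxProd hH))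

variable {n : ℕ}

lemma cycleGraph_adj_natDist {a b : Fin n} (h : (cycleGraph n).Adj a b) :
    Nat.dist a b = 1 ∨ Nat.dist a b + 1 = n := by
  rw [cycleGraph_adj'] at h
  unfold Nat.dist
  rcases lt_trichotomy a b with hab | rfl | hba
  · rw [Fin.coe_sub_iff_lt.2 hab, Fin.coe_sub_iff_le.2 hab.le] at h
    have := Fin.lt_def.1 hab
    omega
  · rw [Fin.coe_sub_iff_le.2 le_rfl] at h
    omega
  · rw [Fin.coe_sub_iff_le.2 hba.le, Fin.coe_sub_iff_lt.2 hba] at h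
    have := Fin.lt_def.1 hba
    omega

lemma cycleGraph_dist_le_of_val_eq_add {i j : Fin n} {m : ℕ} (h : j.val = i.val + m) :
    (cycleGraph n).dist i j ≤ m := by
  induction m generalizing j with
  | zero => simp [Fin.ext h]
  | succ m ih =>
    let j' : Fin n := ⟨i + m, by omega⟩
    have hadj : (cycleGraph n).Adj j' j :=
      pathGraph_le_cycleGraph (pathGraph_adj.2 (Or.inl (by simp only [j']; omega)))
    calc (cycleGraph n).dist i j
        ≤ (cycleGraph n).dist i j' + (cycleGraph n).dist j' j :=
          (cycleGraph_preconnected i j').dist_triangle_left j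
      _ ≤ m + 1 := add_le_add (ih rfl) (dist_eq_one_iff_adj.2 hadj).le

lemma cycleGraph_dist_le_sub_of_lt {u v : Fin n} (huv : u < v) :
    (cycleGraph n).dist u v ≤ n - (v - u) := by
  have hv := v.isLt
  have hlt := Fin.lt_def.1 huv
  let first : Fin n := ⟨0, by omega⟩
  let last : Fin n := ⟨n - 1, by omega⟩
  have hadj : (cycleGraph n).Adj first last := by
    rw [cycleGraph_adj', Fin.coe_sub_iff_lt.2 (Fin.lt_def.2 (by simp only [first, last]; omega))]
    left
    simp only [first, last]
    omega
  have h₁ : (cycleGraph n).dist first u ≤ u :=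
    cycleGraph_dist_le_of_val_eq_add (by simp [first])
  have h₂ : (cycleGraph n).dist v last ≤ n - 1 - v :=
    cycleGraph_dist_le_of_val_eq_add (by simp only [last]; omega)
  have t₁ := (cycleGraph_preconnected u first).dist_triangle_left v
  have t₂ := (cycleGraph_preconnected first last).dist_triangle_left v
  rw [dist_comm (u := u) (v := first)] at t₁
  rw [dist_eq_one_iff_adj.2 hadj, dist_comm (u := last) (v := v)] at t₂
  omega

lemma cycleGraph_dist_eq (u v : Fin n) :
    (cycleGraph n).dist u v = min (Nat.dist u v) (n - Nat.dist u v) := by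
  refine le_antisymm ?_ ?_
  · wlog huv : u ≤ v generalizing u v
    · rw [dist_comm, Nat.dist_comm]
      exact this v u (le_of_not_ge huv)
    rcases huv.eq_or_lt with rfl | hlt
    · simp
    rw [Nat.dist_eq_sub_of_le (Fin.le_def.1 huv)]
    exact le_min (cycleGraph_dist_le_of_val_eq_add (by omega)) (cycleGraph_dist_le_sub_of_lt hlt)
  · have hf : ∀ a b, (cycleGraph n).Adj a b →
        min (Nat.dist a v) (n - Nat.dist a v) ≤ min (Nat.dist b v) (n - Nat.dist b v) + 1 := by
      intro a b hab
      have := cycleGraph_adj_natDist hab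
      have := a.isLt
      have := b.isLt
      have := v.isLt
      unfold Nat.dist at *
      omega
    simpa using (cycleGraph_preconnected u v).apply_le_apply_add_dist hf

lemma cycleGraph_dist_add_dist_add_dist_le (u v w : Fin n) :
    (cycleGraph n).dist u v + (cycleGraph n).dist v w + (cycleGraph n).dist u w ≤ n := by
  have := u.isLt
  have := v.isLt
  have := w.isLt
  simp only [cycleGraph_dist_eq, Nat.dist]
  omega

lemma cycleGraph_half_le_diam (n : ℕ) : n / 2 ≤ (cycleGraph n).diam := by
  rcases n with _ | n
  · simp
  have h := cycleGraph_dist_eq (n := n + 1) 0 ⟨(n + 1) / 2, by omega⟩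
  simp only [Fin.val_zero, Nat.dist] at h
  calc (n + 1) / 2 = (cycleGraph (n + 1)).dist 0 ⟨(n + 1) / 2, by omega⟩ := by omega
    _ ≤ _ := dist_le_diam (connected_iff_ediam_ne_top.1 cycleGraph_connected)

end SimpleGraph

open SimpleGraph

lemma IsRadioLabeling.three_mul_diam_add_one_le {V : Type*} {G : SimpleGraph V} {c : V → ℕ}
    (hc : IsRadioLabeling G c) {u v w : V} (huv : c u < c v) (hvw : c v < c w) :
    3 * (G.diam + 1) ≤ G.dist u v + G.dist v w + G.dist u w + 2 * (c w - c u) := by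
  have h₁ := hc.2 u v (ne_of_apply_ne c huv.ne)
  have h₂ := hc.2 v w (ne_of_apply_ne c hvw.ne)
  have h₃ := hc.2 u w (ne_of_apply_ne c (huv.trans hvw).ne)
  simp only [Nat.dist] at h₁ h₂ h₃
  omega

theorem gap_every_other_label_even_general (n k : ℕ) (hn : n = 2 * k)
    (c : Fin n × Fin n → ℕ) (hc : IsRadioLabeling (cycleGraph n □ cycleGraph n) c)
    (u v w : Fin n × Fin n) (huv : c u < c v) (hvw : c v < c w) :
    k + 2 ≤ c w - c u := by
  have : Nonempty (Fin n) := ⟨u.1⟩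
  have hdiam : n / 2 + n / 2 ≤ (cycleGraph n □ cycleGraph n).diam :=
    (add_le_add (cycleGraph_half_le_diam n) (cycleGraph_half_le_diam n)).trans
      (diam_add_diam_le_diam_boxProd ⟨cycleGraph_preconnected⟩ ⟨cycleGraph_preconnected⟩)
  have hsum : ∀ x y : Fin n × Fin n, (cycleGraph n □ cycleGraph n).dist x y =
      (cycleGraph n).dist x.1 y.1 + (cycleGraph n).dist x.2 y.2 := fun x y =>
    dist_boxProd (cycleGraph_preconnected _ _) (cycleGraph_preconnected _ _)
  have h₁ := cycleGraph_dist_add_dist_add_dist_le u.1 v.1 w.1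
  have h₂ := cycleGraph_dist_add_dist_add_dist_le u.2 v.2 w.2
  have hradio := hc.three_mul_diam_add_one_le huv hvw
  rw [hsum, hsum, hsum] at hradio
  omega

/-- for `n = 2k`, `k ≥ 2`, any radio labeling `c` of `C_n □ C_n` and vertices
`u, v, w` with `c u < c v < c w` satisfy `c w - c u ≥ k + 2`. -/
theorem gap_every_other_label_even (n k : ℕ) (hk : 2 ≤ k) (hn : n = 2 * k)
    (c : Fin n × Fin n → ℕ) (hc : IsRadioLabeling (cycleGraph n □ cycleGraph n) c)
    (u v w : Fin n × Fin n) (huv : c u < c v) (hvw : c v < c w) :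
    k + 2 ≤ c w - c u :=
  gap_every_other_label_even_general n k hn c hc u v w huv hvw
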